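/- arXiv:2507.02374 — 3 statements merged into one kernel-verified Lean document; each statement's English description precedes it below -/
import Mathlib

section
/- Let a > 0, define R(Γ) = ln(1+Γ) − a·√(1 − (1+Γ)⁻²) for Γ ≥ 0, and set Γ₀ = √(1/2 + √(1/4 + a²)) − 1. Then R is strictly decreasing on the interval [0, Γ₀] and strictly increasing on the interval [Γ₀, ∞). -/
/-!
Substitute `x = 1 + Γ`. The derivative of `log x - a √(1 - x⁻²) = log x - a √(x² - 1) / x` is
`(x √(x² - 1) - a) / (x² √(x² - 1))`, so its sign is that of `x √(x² - 1) - a`. The map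
`x ↦ x √(x² - 1)` is strictly increasing on `[1, ∞)` and takes the value `a` at
`x₀ = √(1/2 + √(1/4 + a²)) = 1 + Γ₀`, because `x₀² (x₀² - 1) = a²`.
-/

open Real Set

noncomputable def rate (a x : ℝ) : ℝ := log x - a * √(1 - (x ^ 2)⁻¹)

lemma sqrt_one_sub_inv_sq {x : ℝ} (hx : 0 < x) : √(1 - (x ^ 2)⁻¹) = √(x ^ 2 - 1) / x := by
  rw [show 1 - (x ^ 2)⁻¹ = (x ^ 2 - 1) / x ^ 2 by field_simp, sqrt_div' _ (sq_nonneg x),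
    sqrt_sq hx.le]

lemma hasDerivAt_rate (a : ℝ) {x : ℝ} (hx : 1 < x) :
    HasDerivAt (rate a) ((x * √(x ^ 2 - 1) - a) / (x ^ 2 * √(x ^ 2 - 1))) x := by
  have hx0 : 0 < x := by linarith
  have hsq : 0 < x ^ 2 - 1 := by nlinarith
  have hrate : (fun y => log y - a * (√(y ^ 2 - 1) / y)) =ᶠ[nhds x] rate a := by
    filter_upwards [Ioi_mem_nhds hx0] with y hy
    rw [rate, sqrt_one_sub_inv_sq hy]
  have hroot : HasDerivAt (fun y => √(y ^ 2 - 1)) (2 * x / (2 * √(x ^ 2 - 1))) x := by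
    simpa using ((hasDerivAt_pow 2 x).sub_const 1).sqrt hsq.ne'
  have hdiff := (hasDerivAt_log hx0.ne').sub ((hroot.div (hasDerivAt_id x) hx0.ne').const_mul a)
  refine (hdiff.congr_of_eventuallyEq hrate.symm).congr_deriv ?_
  have := sq_sqrt hsq.le
  simp only [id]
  field_simp
  linear_combination a * this

lemma continuousOn_rate (a : ℝ) : ContinuousOn (rate a) (Ioi 0) := by
  unfold rate
  fun_prop (disch := intros; simp_all [ne_of_gt])

lemma strictMonoOn_mul_sqrt_sq_sub_one : StrictMonoOn (fun x : ℝ => x * √(x ^ 2 - 1)) (Ici 1) := by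
  intro x (hx : 1 ≤ x) y (hy : 1 ≤ y) hxy
  have hy' : 0 < √(y ^ 2 - 1) := sqrt_pos.2 (by nlinarith)
  calc x * √(x ^ 2 - 1) ≤ x * √(y ^ 2 - 1) := by gcongr
    _ < y * √(y ^ 2 - 1) := by gcongr

noncomputable def criticalPoint (a : ℝ) : ℝ := √(1 / 2 + √(1 / 4 + a ^ 2))

lemma one_le_criticalPoint (a : ℝ) : 1 ≤ criticalPoint a := by
  have : 1 / 2 ≤ √(1 / 4 + a ^ 2) := le_sqrt_of_sq_le (by nlinarith)
  rw [criticalPoint, one_le_sqrt]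
  linarith

lemma criticalPoint_mul_sqrt_sq_sub_one {a : ℝ} (ha : 0 ≤ a) :
    criticalPoint a * √(criticalPoint a ^ 2 - 1) = a := by
  unfold criticalPoint
  set q := √(1 / 4 + a ^ 2)
  have hq : q ^ 2 = 1 / 4 + a ^ 2 := sq_sqrt (by positivity)
  have hp : 0 ≤ 1 / 2 + q := by positivity
  rw [sq_sqrt hp, ← sqrt_mul hp,
    show (1 / 2 + q) * (1 / 2 + q - 1) = a ^ 2 by linear_combination hq, sqrt_sq ha]

lemma strictAntiOn_rate {a x₀ : ℝ} (hx₀ : 1 ≤ x₀) (ha : x₀ * √(x₀ ^ 2 - 1) = a) :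
    StrictAntiOn (rate a) (Icc 1 x₀) := by
  refine strictAntiOn_of_deriv_neg (convex_Icc 1 x₀)
    ((continuousOn_rate a).mono fun x hx => zero_lt_one.trans_le hx.1) fun x hx => ?_
  obtain ⟨hx1, hxx₀⟩ : x ∈ Ioo 1 x₀ := by rwa [interior_Icc] at hx
  rw [(hasDerivAt_rate a hx1).deriv]
  have hs : 0 < √(x ^ 2 - 1) := sqrt_pos.2 (by nlinarith)
  have hlt : x * √(x ^ 2 - 1) < x₀ * √(x₀ ^ 2 - 1) :=
    strictMonoOn_mul_sqrt_sq_sub_one (mem_Ici.2 hx1.le) (mem_Ici.2 hx₀) hxx₀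
  exact div_neg_of_neg_of_pos (by linarith) (mul_pos (by nlinarith) hs)

lemma strictMonoOn_rate {a x₀ : ℝ} (hx₀ : 1 ≤ x₀) (ha : x₀ * √(x₀ ^ 2 - 1) = a) :
    StrictMonoOn (rate a) (Ici x₀) := by
  refine strictMonoOn_of_deriv_pos (convex_Ici x₀)
    ((continuousOn_rate a).mono fun x hx => zero_lt_one.trans_le (hx₀.trans hx)) fun x hx => ?_
  rw [interior_Ici, mem_Ioi] at hx
  have hx1 : 1 < x := hx₀.trans_lt hx
  rw [(hasDerivAt_rate a hx1).deriv]
  have hs : 0 < √(x ^ 2 - 1) := sqrt_pos.2 (by nlinarith)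
  have hlt : x₀ * √(x₀ ^ 2 - 1) < x * √(x ^ 2 - 1) :=
    strictMonoOn_mul_sqrt_sq_sub_one (mem_Ici.2 hx₀) (mem_Ici.2 hx1.le) hx
  exact div_pos (by linarith) (mul_pos (by nlinarith) hs)

/-- For `a > 0`, the function `R(Γ) = ln(1+Γ) − a·√(1 − (1+Γ)⁻²)` is strictly decreasing on
`[0, Γ₀]` and strictly increasing on `[Γ₀, ∞)`, where `Γ₀ = √(1/2 + √(1/4 + a²)) − 1`. -/
theorem stmt_3 (a : ℝ) (ha : 0 < a)
    (R : ℝ → ℝ) (hR : ∀ Γ : ℝ, R Γ = Real.log (1 + Γ) - a * Real.sqrt (1 - ((1 + Γ) ^ 2)⁻¹))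
    (Γ₀ : ℝ) (hΓ₀ : Γ₀ = Real.sqrt (1 / 2 + Real.sqrt (1 / 4 + a ^ 2)) - 1) :
    StrictAntiOn R (Set.Icc 0 Γ₀) ∧ StrictMonoOn R (Set.Ici Γ₀) := by
  have hR' : ∀ Γ, R Γ = rate a (1 + Γ) := hR
  have hx₀ : criticalPoint a = 1 + Γ₀ := by rw [criticalPoint, hΓ₀]; ring
  have hle := one_le_criticalPoint a
  have hroot := criticalPoint_mul_sqrt_sq_sub_one ha.le
  rw [hx₀] at hle hroot
  constructor
  · rintro u ⟨hu₀, hu⟩ v ⟨hv₀, hv⟩ huv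
    rw [hR', hR']
    exact strictAntiOn_rate hle hroot ⟨by linarith, by linarith⟩ ⟨by linarith, by linarith⟩
      (by linarith)
  · intro u (hu : Γ₀ ≤ u) v (hv : Γ₀ ≤ v) huv
    rw [hR', hR']
    exact strictMonoOn_rate hle hroot (mem_Ici.2 (by linarith)) (mem_Ici.2 (by linarith))
      (by linarith)
end

section
/- Let a > 0, define R(Γ) = ln(1+Γ) − a·√(1 − (1+Γ)⁻²) for Γ ≥ 0, and set Γ₀ = √(1/2 + √(1/4 + a²)) − 1. Then R(0) = 0 and R(Γ₀) < 0. -/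
/-! With `x = 1 + Γ₀` the definition of `Γ₀` gives `a² = x²(x² − 1)`, which collapses the penalty
term to `a·√(1 − x⁻²) = x² − 1`. Hence `R(Γ₀) = ln x − (x² − 1)`, negative because
`ln x < x − 1 < x² − 1` for `x > 1`. -/

namespace Real

theorem mul_sqrt_one_sub_inv_sq_eq {a x : ℝ} (ha : 0 ≤ a) (hx : x ≠ 0)
    (hax : a ^ 2 = x ^ 2 * (x ^ 2 - 1)) : a * √(1 - (x ^ 2)⁻¹) = x ^ 2 - 1 := by
  have hx2 : 0 < x ^ 2 := by positivity
  have hx2_ge : 1 ≤ x ^ 2 := by nlinarith [sq_nonneg a]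
  have hsq : a ^ 2 * (1 - (x ^ 2)⁻¹) = (x ^ 2 - 1) ^ 2 := by
    field_simp
    rw [hax]
    ring
  calc a * √(1 - (x ^ 2)⁻¹) = √(a ^ 2 * (1 - (x ^ 2)⁻¹)) := by
        rw [sqrt_mul (sq_nonneg a), sqrt_sq ha]
    _ = x ^ 2 - 1 := by rw [hsq, sqrt_sq (by linarith)]

theorem sq_mul_sq_sub_one_sqrt_half_add_sqrt (a : ℝ) :
    a ^ 2 = √(1 / 2 + √(1 / 4 + a ^ 2)) ^ 2 * (√(1 / 2 + √(1 / 4 + a ^ 2)) ^ 2 - 1) := by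
  have hs : √(1 / 4 + a ^ 2) ^ 2 = 1 / 4 + a ^ 2 := sq_sqrt (by positivity)
  rw [sq_sqrt (by positivity)]
  linear_combination -hs

theorem one_lt_sqrt_half_add_sqrt {a : ℝ} (ha : a ≠ 0) : 1 < √(1 / 2 + √(1 / 4 + a ^ 2)) := by
  have ha2 : 0 < a ^ 2 := by positivity
  have hs : 1 / 2 < √(1 / 4 + a ^ 2) :=
    lt_sqrt_of_sq_lt (by linarith)
  exact lt_sqrt_of_sq_lt (by linarith)

end Real

/-- For `a > 0` and `R(Γ) = ln(1+Γ) − a·√(1 − (1+Γ)⁻²)`, with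
`Γ₀ = √(1/2 + √(1/4 + a²)) − 1`, one has `R(0) = 0` and `R(Γ₀) < 0`. -/
theorem stmt_4 (a : ℝ) (ha : 0 < a)
    (R : ℝ → ℝ) (hR : ∀ Γ : ℝ, R Γ = Real.log (1 + Γ) - a * Real.sqrt (1 - ((1 + Γ) ^ 2)⁻¹))
    (Γ₀ : ℝ) (hΓ₀ : Γ₀ = Real.sqrt (1 / 2 + Real.sqrt (1 / 4 + a ^ 2)) - 1) :
    R 0 = 0 ∧ R Γ₀ < 0 := by
  refine ⟨by simp [hR], ?_⟩
  set x := Real.sqrt (1 / 2 + Real.sqrt (1 / 4 + a ^ 2))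
  have hx : 1 < x := Real.one_lt_sqrt_half_add_sqrt ha.ne'
  have hΓx : 1 + Γ₀ = x := by rw [hΓ₀]; ring
  rw [hR, hΓx, Real.mul_sqrt_one_sub_inv_sq_eq ha.le (by positivity)
    (Real.sq_mul_sq_sub_one_sqrt_half_add_sqrt a)]
  have hlog : Real.log x < x - 1 := Real.log_lt_sub_one_of_pos (by positivity) hx.ne'
  nlinarith
end

section
/- Let a > 0, define R(Γ) = ln(1+Γ) − a·√(1 − (1+Γ)⁻²) for Γ ≥ 0, and set Γ₀ = √(1/2 + √(1/4 + a²)) − 1. For every r > 0 there exists a unique Γ_th > Γ₀ such that R(Γ_th) = r; moreover, for every Γ ≥ 0, R(Γ) < r if and only if Γ < Γ_th. In other words, the outage event {R(Γ) < r} coincides with the SNR event {Γ < Γ_th}. -/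
/-!
Write `x = 1 + Γ`. The derivative of `log x - a √(1 - x⁻²)` is
`(x √(x² - 1) - a) / (x² √(x² - 1))`, and `x ↦ x √(x² - 1)` increases on `[1, ∞)` and
equals `a` at `x₀ = 1 + Γ₀`. So the rate decreases from `0` on `[1, x₀]` and increases to `∞`
on `[x₀, ∞)`; a positive level `r` is therefore attained exactly once, beyond `x₀`, and below
that point the rate is `< r`.
-/

open Real Set Filter

namespace FiniteBlocklength

noncomputable def rate (a x : ℝ) : ℝ := log x - a * √(1 - (x ^ 2)⁻¹)

/-- The positive root of `x² (x² - 1) = a²`, i.e. `1 + Γ₀`. -/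
noncomputable def turningPoint (a : ℝ) : ℝ := √(1 / 2 + √(1 / 4 + a ^ 2))

theorem one_le_turningPoint (a : ℝ) : 1 ≤ turningPoint a := by
  have : 1 / 2 ≤ √(1 / 4 + a ^ 2) := Real.le_sqrt_of_sq_le (by nlinarith)
  exact Real.le_sqrt_of_sq_le (by linarith)

theorem turningPoint_mul_sqrt {a : ℝ} (ha : 0 ≤ a) :
    turningPoint a * √(turningPoint a ^ 2 - 1) = a := by
  have hs : √(1 / 4 + a ^ 2) ^ 2 = 1 / 4 + a ^ 2 := Real.sq_sqrt (by positivity)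
  have ht : turningPoint a ^ 2 = 1 / 2 + √(1 / 4 + a ^ 2) := Real.sq_sqrt (by positivity)
  calc turningPoint a * √(turningPoint a ^ 2 - 1)
      = √(turningPoint a ^ 2 * (turningPoint a ^ 2 - 1)) := by
        rw [Real.sqrt_mul (sq_nonneg _), Real.sqrt_sq (zero_le_one.trans (one_le_turningPoint a))]
    _ = √(a ^ 2) := by rw [ht]; congr 1; nlinarith
    _ = a := Real.sqrt_sq ha

theorem sqrt_one_sub_inv_sq {x : ℝ} (hx : 0 < x) :
    √(1 - (x ^ 2)⁻¹) = √(x ^ 2 - 1) / x := by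
  rw [show 1 - (x ^ 2)⁻¹ = (x ^ 2 - 1) / x ^ 2 by field_simp, Real.sqrt_div' _ (sq_nonneg x),
    Real.sqrt_sq hx.le]

theorem hasDerivAt_rate (a : ℝ) {x : ℝ} (hx : 1 < x) :
    HasDerivAt (rate a) ((x * √(x ^ 2 - 1) - a) / (x ^ 2 * √(x ^ 2 - 1))) x := by
  have hx0 : 0 < x := by positivity
  have hs : 0 < √(x ^ 2 - 1) := Real.sqrt_pos.mpr (by nlinarith)
  have hu : HasDerivAt (fun y : ℝ => 1 - (y ^ 2)⁻¹) (2 * x / (x ^ 2) ^ 2) x := by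
    simpa [neg_div] using (((hasDerivAt_pow 2 x).inv (by positivity)).const_sub 1)
  have hu0 : 1 - (x ^ 2)⁻¹ ≠ 0 := (sub_pos.mpr (inv_lt_one_of_one_lt₀ (by nlinarith))).ne'
  refine ((Real.hasDerivAt_log hx0.ne').sub ((hu.sqrt hu0).const_mul a)).congr_deriv ?_
  rw [sqrt_one_sub_inv_sq hx0]
  field_simp

theorem continuousAt_rate (a : ℝ) {x : ℝ} (hx : x ≠ 0) : ContinuousAt (rate a) x := by
  unfold rate
  fun_prop (disch := positivity)

theorem continuousOn_rate (a : ℝ) : ContinuousOn (rate a) (Ici 1) := fun x hx =>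
  (continuousAt_rate a (by linarith [mem_Ici.mp hx] : x ≠ 0)).continuousWithinAt

theorem strictMonoOn_mul_sqrt_sq_sub_one :
    StrictMonoOn (fun x : ℝ => x * √(x ^ 2 - 1)) (Ici 1) := by
  intro x hx y hy hxy
  have hx1 : 1 ≤ x := hx
  have hsqrt : √(x ^ 2 - 1) ≤ √(y ^ 2 - 1) := Real.sqrt_le_sqrt (by nlinarith)
  have hpos : 0 < √(y ^ 2 - 1) := Real.sqrt_pos.mpr (by nlinarith)
  calc x * √(x ^ 2 - 1) ≤ x * √(y ^ 2 - 1) := by gcongr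
    _ < y * √(y ^ 2 - 1) := by gcongr

theorem strictMonoOn_rate {a : ℝ} (ha : 0 ≤ a) :
    StrictMonoOn (rate a) (Ici (turningPoint a)) := by
  have h1 := one_le_turningPoint a
  refine strictMonoOn_of_deriv_pos (convex_Ici _)
    ((continuousOn_rate a).mono (Ici_subset_Ici.mpr h1)) fun x hx => ?_
  rw [interior_Ici, mem_Ioi] at hx
  have hx1 : 1 < x := h1.trans_lt hx
  rw [(hasDerivAt_rate a hx1).deriv]
  have hφ : a < x * √(x ^ 2 - 1) := by
    rw [← turningPoint_mul_sqrt ha]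
    exact strictMonoOn_mul_sqrt_sq_sub_one h1 hx1.le hx
  have hs : 0 < √(x ^ 2 - 1) := Real.sqrt_pos.mpr (by nlinarith)
  exact div_pos (by linarith) (by positivity)

theorem strictAntiOn_rate {a : ℝ} (ha : 0 ≤ a) :
    StrictAntiOn (rate a) (Icc 1 (turningPoint a)) := by
  refine strictAntiOn_of_deriv_neg (convex_Icc _ _)
    ((continuousOn_rate a).mono Icc_subset_Ici_self) fun x hx => ?_
  rw [interior_Icc, mem_Ioo] at hx
  rw [(hasDerivAt_rate a hx.1).deriv]
  have hφ : x * √(x ^ 2 - 1) < a := by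
    rw [← turningPoint_mul_sqrt ha]
    exact strictMonoOn_mul_sqrt_sq_sub_one hx.1.le (one_le_turningPoint a) hx.2
  have hs : 0 < √(x ^ 2 - 1) := Real.sqrt_pos.mpr (by nlinarith)
  exact div_neg_of_neg_of_pos (by linarith) (mul_pos (by nlinarith) hs)

theorem rate_nonpos {a x : ℝ} (ha : 0 ≤ a) (hx : x ∈ Icc 1 (turningPoint a)) :
    rate a x ≤ 0 := by
  simpa [rate] using (strictAntiOn_rate ha).antitoneOn ⟨le_rfl, one_le_turningPoint a⟩ hx hx.1

theorem log_sub_le_rate {a x : ℝ} (ha : 0 ≤ a) (hx : 1 ≤ x) : log x - a ≤ rate a x := by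
  have : √(1 - (x ^ 2)⁻¹) ≤ 1 := Real.sqrt_le_one.mpr (sub_le_self _ (by positivity))
  unfold rate
  nlinarith

theorem tendsto_rate_atTop {a : ℝ} (ha : 0 ≤ a) : Tendsto (rate a) atTop atTop :=
  tendsto_atTop_mono' atTop ((eventually_ge_atTop 1).mono fun _ => log_sub_le_rate ha)
    (tendsto_atTop_add_const_right _ (-a) tendsto_log_atTop)

theorem rate_lt_rate_iff {a x c : ℝ} (ha : 0 ≤ a) (hx : 1 ≤ x) (hc : turningPoint a ≤ c)
    (hrc : 0 < rate a c) :
    rate a x < rate a c ↔ x < c := by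
  rcases le_or_gt x (turningPoint a) with hxt | htx
  · have := rate_nonpos ha ⟨hx, hxt⟩
    refine ⟨fun _ => hxt.trans_lt (hc.lt_of_ne ?_), fun _ => by linarith⟩
    rintro rfl
    linarith [rate_nonpos ha ⟨one_le_turningPoint a, le_rfl⟩]
  · exact (strictMonoOn_rate ha).lt_iff_lt htx.le hc

theorem exists_rate_eq {a r : ℝ} (ha : 0 ≤ a) (hr : 0 < r) :
    ∃ c, turningPoint a < c ∧ rate a c = r := by
  have hx0 := rate_nonpos ha ⟨one_le_turningPoint a, le_rfl⟩
  obtain ⟨c, hc, hrc⟩ := intermediate_value_Ici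
    ((continuousOn_rate a).mono (Ici_subset_Ici.mpr (one_le_turningPoint a)))
    (tendsto_rate_atTop ha) (mem_Ici.mpr (hx0.trans hr.le))
  refine ⟨c, (mem_Ici.mp hc).lt_of_ne ?_, hrc⟩
  rintro rfl
  linarith

end FiniteBlocklength

/-- For `a > 0`, `R(Γ) = ln(1+Γ) − a·√(1 − (1+Γ)⁻²)`, and `Γ₀ = √(1/2 + √(1/4 + a²)) − 1`:
for every `r > 0` there is a unique `Γ_th > Γ₀` with `R(Γ_th) = r`, and for every `Γ ≥ 0`
the outage event `R(Γ) < r` coincides with the SNR event `Γ < Γ_th`. -/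
theorem stmt_6 (a : ℝ) (ha : 0 < a)
    (R : ℝ → ℝ) (hR : ∀ Γ : ℝ, R Γ = Real.log (1 + Γ) - a * Real.sqrt (1 - ((1 + Γ) ^ 2)⁻¹))
    (Γ₀ : ℝ) (hΓ₀ : Γ₀ = Real.sqrt (1 / 2 + Real.sqrt (1 / 4 + a ^ 2)) - 1)
    (r : ℝ) (hr : 0 < r) :
    ∃ Γth : ℝ, Γ₀ < Γth ∧ R Γth = r ∧
      (∀ Γ' : ℝ, Γ₀ < Γ' → R Γ' = r → Γ' = Γth) ∧
      (∀ Γ : ℝ, 0 ≤ Γ → (R Γ < r ↔ Γ < Γth)) := by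
  have hR' : ∀ Γ, R Γ = FiniteBlocklength.rate a (1 + Γ) := hR
  have hΓ₀' : Γ₀ = FiniteBlocklength.turningPoint a - 1 := hΓ₀
  obtain ⟨c, hc, hrc⟩ := FiniteBlocklength.exists_rate_eq ha.le hr
  refine ⟨c - 1, by linarith, by rw [hR', add_sub_cancel, hrc], fun Γ' hΓ' hRΓ' => ?_,
    fun Γ hΓ => ?_⟩
  · have hΓ'_mem : 1 + Γ' ∈ Ici (FiniteBlocklength.turningPoint a) := mem_Ici.mpr (by linarith)
    have := (FiniteBlocklength.strictMonoOn_rate ha.le).injOn hΓ'_mem hc.le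
      (by rw [← hR', hRΓ', hrc])
    linarith
  · rw [hR', ← hrc, FiniteBlocklength.rate_lt_rate_iff ha.le (by linarith) hc.le (hrc ▸ hr),
      lt_sub_iff_add_lt']
end
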